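/- arXiv:1209.3849 — 2 statements merged into one kernel-verified Lean document; each statement's English description precedes it below -/
import Mathlib

section
/- Let k > 100 and n > 100·k². Choose a partition Π of Fin n into 100·k² classes uniformly at random, i.e., Π : Fin n → Fin (100·k²) is chosen uniformly among all functions. For a subset J ⊆ Fin n, let N(Π, J) denote the number of classes c ∈ Fin (100·k²) such that |{j ∈ J : Π(j) = c}| is odd. Then for every J ⊆ Fin n with |J| > k, the probability that N(Π, J) > k is greater than 9/10. -/
/-!
Let `m = 100k²`, `t = |J|` and `N(π)` the number of odd classes; probabilities are counts of
functions divided by `m ^ n`.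

If `t ≤ 51k`: an element of `J` alone in its class makes that class odd, so `t ≤ N(π) + C(π)`,
where `C(π)` counts ordered pairs of distinct elements of `J` in a common class. Since `C` has
mean `t(t-1)/m`, Markov's inequality bounds the probability of `N ≤ k` by `t(t-1)/(m(t-k)) < 1/10`.

If `t > 51k`: the sign sum `S(π) = ∑_c (-1)^|J ∩ π⁻¹(c)| = m - 2N(π)` is a sum of products of
independent coordinates, so its first two moments are explicit: the mean is
`μ = m(1-2/m)^t ≤ m - 34k` and the variance is at most `m`. Chebyshev's inequality gives
`P(N ≤ k) ≤ P(S - μ ≥ 32k) ≤ m/(32k)² < 1/10`.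
-/

open Finset

namespace RandomPartition

theorem one_sub_pow_mul_one_add_mul_le_one {x : ℝ} (h0 : 0 ≤ x) (h1 : x ≤ 1) (t : ℕ) :
    (1 - x) ^ t * (1 + t * x) ≤ 1 :=
  calc (1 - x) ^ t * (1 + t * x) ≤ (1 - x) ^ t * (1 + x) ^ t :=
        mul_le_mul_of_nonneg_left (one_add_mul_le_pow (by linarith) t) (pow_nonneg (by linarith) t)
    _ = (1 - x ^ 2) ^ t := by rw [← mul_pow]; ring
    _ ≤ 1 := pow_le_one₀ (by nlinarith) (by nlinarith)

variable {ι α : Type*} [Fintype α]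

theorem sum_fun_prod_apply [Fintype ι] [DecidableEq ι] {R : Type*} [CommSemiring R]
    (J : Finset ι) (g : α → R) :
    ∑ π : ι → α, ∏ j ∈ J, g (π j) =
      (∑ x, g x) ^ #J * (Fintype.card α : R) ^ (Fintype.card ι - #J) := by
  calc ∑ π : ι → α, ∏ j ∈ J, g (π j)
      = ∑ π : ι → α, ∏ j, if j ∈ J then g (π j) else 1 := by
        simp only [prod_ite_mem, univ_inter]
    _ = ∏ j, ∑ x, if j ∈ J then g x else 1 :=
        (Fintype.prod_sum fun j x => if j ∈ J then g x else 1).symm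
    _ = ∏ j, if j ∈ J then ∑ x, g x else (Fintype.card α : R) := by
        congr! 1 with j
        split_ifs <;> simp
    _ = _ := by
        rw [prod_ite, prod_const, prod_const, filter_mem_eq_inter, univ_inter,
          filter_not, filter_mem_eq_inter, univ_inter, card_univ_sdiff]

variable [DecidableEq α]

def oddClasses (π : ι → α) (J : Finset ι) : Finset α :=
  {c | Odd #{j ∈ J | π j = c}}

def collisionPairs [DecidableEq ι] (π : ι → α) (J : Finset ι) : Finset (ι × ι) :=
  {p ∈ J.offDiag | π p.1 = π p.2}

theorem card_le_card_oddClasses_add_card_collisionPairs [DecidableEq ι] (π : ι → α) (J : Finset ι) :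
    #J ≤ #(oddClasses π J) + #(collisionPairs π J) := by
  set A := (collisionPairs π J).image Prod.fst
  have hA : #A ≤ #(collisionPairs π J) := card_image_le
  have hcollide : ∀ i ∈ J, ∀ j ∈ J, i ≠ j → π i = π j → i ∈ A := fun i hi j hj hij h =>
    mem_image.2 ⟨(i, j), by simp [collisionPairs, hi, hj, hij, h], rfl⟩
  have hsingle : #(J \ A) ≤ #(oddClasses π J) := by
    refine card_le_card_of_injOn π (fun i hi => ?_) fun i hi j hj h => ?_
    · obtain ⟨hiJ, hiA⟩ := mem_sdiff.1 hi
      have : {j ∈ J | π j = π i} = {i} := by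
        ext j
        simp only [mem_filter, mem_singleton]
        exact ⟨fun ⟨hj, h⟩ => by_contra fun hji => hiA (hcollide i hiJ j hj (Ne.symm hji) h.symm),
          by rintro rfl; exact ⟨hiJ, rfl⟩⟩
      simp [oddClasses, this]
    · simp only [coe_sdiff, Set.mem_sdiff, mem_coe] at hi hj
      exact by_contra fun hij => hi.2 (hcollide i hi.1 j hj.1 hij h)
  have := card_le_card_sdiff_add_card (s := J) (t := A)
  omega

def classSign (c x : α) : ℝ :=
  if x = c then -1 else 1

theorem sum_classSign (c : α) : ∑ x, classSign c x = Fintype.card α - 2 := by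
  simp_rw [classSign, show ∀ x, (if x = c then -1 else 1 : ℝ) = 1 - 2 * if x = c then 1 else 0 by
    intro x; split_ifs <;> norm_num]
  simp [sum_sub_distrib]

theorem sum_classSign_mul_classSign (c c' : α) :
    ∑ x, classSign c x * classSign c' x = Fintype.card α - 4 + if c = c' then 4 else 0 := by
  simp_rw [classSign, show ∀ x, (if x = c then -1 else 1 : ℝ) * (if x = c' then -1 else 1) =
      1 - 2 * (if x = c then 1 else 0) - 2 * (if x = c' then 1 else 0) +
        4 * (if x = c then if c = c' then 1 else 0 else 0) by
    intro x; split_ifs <;> simp_all <;> norm_num]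
  simp [sum_add_distrib, sum_sub_distrib]
  ring

def signSum (π : ι → α) (J : Finset ι) : ℝ :=
  ∑ c, ∏ j ∈ J, classSign c (π j)

theorem signSum_eq (π : ι → α) (J : Finset ι) :
    signSum π J = Fintype.card α - 2 * #(oddClasses π J) := by
  have hsign (c : α) : ∏ j ∈ J, classSign c (π j) =
      1 - 2 * if Odd #{j ∈ J | π j = c} then 1 else 0 := by
    simp only [classSign]
    rw [prod_ite, prod_const, prod_const, one_pow, mul_one]
    rcases Nat.even_or_odd #{j ∈ J | π j = c} with h | h
    · simp [h.neg_one_pow, Nat.not_odd_iff_even.2 h]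
    · simp [h.neg_one_pow, h]; norm_num
  simp only [signSum, hsign, sum_sub_distrib, ← mul_sum, sum_boole, sum_const, card_univ,
    nsmul_one, oddClasses]

variable [Fintype ι] [DecidableEq ι]

theorem card_filter_apply_eq_apply {i j : ι} (hij : i ≠ j) :
    #{π : ι → α | π i = π j} = Fintype.card α ^ (Fintype.card ι - 1) := by
  have hι : 2 ≤ Fintype.card ι := by
    simpa [card_pair hij] using card_le_univ ({i, j} : Finset ι)
  have hmeet (π : ι → α) (c : α) : (π i = c ∧ π j = c) ↔ (π i = π j ∧ π j = c) :=
    ⟨fun ⟨hi, hj⟩ => ⟨hi.trans hj.symm, hj⟩, fun ⟨hij, hj⟩ => ⟨hij.trans hj, hj⟩⟩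
  calc #{π : ι → α | π i = π j}
      = ∑ π : ι → α, ∑ c, ∏ l ∈ {i, j}, if π l = c then 1 else 0 := by
        rw [card_filter]
        refine sum_congr rfl fun π _ => ?_
        simp_rw [prod_pair hij, ite_zero_mul_ite_zero, mul_one, hmeet, ite_and]
        split_ifs <;> simp
    _ = ∑ c : α, Fintype.card α ^ (Fintype.card ι - 2) := by
        rw [sum_comm]
        refine sum_congr rfl fun c _ => ?_
        simpa [card_pair hij] using sum_fun_prod_apply {i, j} fun x => if x = c then (1 : ℕ) else 0
    _ = _ := by
        rw [sum_const, card_univ, smul_eq_mul, ← pow_succ']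
        congr 1
        omega

theorem sum_card_collisionPairs (J : Finset ι) :
    ∑ π : ι → α, #(collisionPairs π J) =
      #J.offDiag * Fintype.card α ^ (Fintype.card ι - 1) := by
  simp only [collisionPairs, card_filter]
  rw [sum_comm, ← smul_eq_mul, ← sum_const]
  refine sum_congr rfl fun p hp => ?_
  rw [← card_filter, card_filter_apply_eq_apply (mem_offDiag.1 hp).2.2]

theorem card_filter_card_oddClasses_le_mul_le (J : Finset ι) (k : ℕ) :
    #{π : ι → α | #(oddClasses π J) ≤ k} * (#J - k) ≤
      #J.offDiag * Fintype.card α ^ (Fintype.card ι - 1) :=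
  calc #{π : ι → α | #(oddClasses π J) ≤ k} * (#J - k)
      = ∑ π ∈ {π : ι → α | #(oddClasses π J) ≤ k}, (#J - k) := by rw [sum_const, smul_eq_mul]
    _ ≤ ∑ π ∈ {π : ι → α | #(oddClasses π J) ≤ k}, #(collisionPairs π J) :=
        sum_le_sum fun π hπ => by
          have := card_le_card_oddClasses_add_card_collisionPairs π J
          rw [mem_filter] at hπ
          omega
    _ ≤ ∑ π : ι → α, #(collisionPairs π J) := sum_le_sum_of_subset (subset_univ _)
    _ = _ := sum_card_collisionPairs J

theorem sum_signSum (J : Finset ι) :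
    ∑ π : ι → α, signSum π J =
      Fintype.card α * (Fintype.card α - 2) ^ #J * Fintype.card α ^ (Fintype.card ι - #J) := by
  simp only [signSum]
  rw [sum_comm]
  simp [sum_fun_prod_apply, sum_classSign, mul_assoc]

theorem sum_signSum_sq (J : Finset ι) :
    ∑ π : ι → α, signSum π J ^ 2 =
      (Fintype.card α * Fintype.card α ^ #J +
          Fintype.card α * (Fintype.card α - 1) * (Fintype.card α - 4) ^ #J) *
        Fintype.card α ^ (Fintype.card ι - #J) := by
  simp only [signSum, sq, sum_mul_sum, ← prod_mul_distrib]
  rw [sum_comm]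
  have hpow (c c' : α) : ((Fintype.card α : ℝ) - 4 + if c = c' then 4 else 0) ^ #J =
      (Fintype.card α - 4) ^ #J +
        if c = c' then (Fintype.card α : ℝ) ^ #J - (Fintype.card α - 4) ^ #J else 0 := by
    split_ifs <;> ring
  have hrow (c : α) : ∑ π : ι → α, ∑ c', ∏ j ∈ J, classSign c (π j) * classSign c' (π j) =
      (Fintype.card α ^ #J + (Fintype.card α - 1) * (Fintype.card α - 4) ^ #J) *
        Fintype.card α ^ (Fintype.card ι - #J) := by
    rw [sum_comm,
      sum_congr rfl fun c' _ => sum_fun_prod_apply J fun x => classSign c x * classSign c' x]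
    simp only [sum_classSign_mul_classSign, hpow, ← sum_mul, sum_add_distrib, sum_ite_eq, mem_univ,
      if_true, sum_const, card_univ, nsmul_eq_mul]
    ring
  simp only [hrow, sum_const, card_univ, nsmul_eq_mul]
  ring

theorem sum_sub_sq_signSum_le (hα : 4 ≤ Fintype.card α) (J : Finset ι) :
    ∑ π : ι → α, (signSum π J - Fintype.card α * ((Fintype.card α - 2) / Fintype.card α) ^ #J) ^ 2
      ≤ (Fintype.card α : ℝ) ^ Fintype.card ι * Fintype.card α := by
  set m : ℝ := (Fintype.card α : ℝ) with hm_def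
  set μ := m * ((m - 2) / m) ^ #J
  have hm : (4 : ℝ) ≤ m := by rw [hm_def]; exact_mod_cast hα
  have hsplit : m ^ Fintype.card ι = m ^ #J * m ^ (Fintype.card ι - #J) := by
    rw [← pow_add, Nat.add_sub_cancel' (card_le_univ J)]
  have hmean : ∑ π : ι → α, signSum π J = m ^ Fintype.card ι * μ := by
    rw [sum_signSum, ← hm_def, hsplit]
    simp only [μ, div_pow]
    field_simp
  have hsq : ∑ π : ι → α, signSum π J ^ 2 =
      m ^ Fintype.card ι * (m + m * (m - 1) * ((m - 4) / m) ^ #J) := by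
    rw [sum_signSum_sq, ← hm_def, hsplit, div_pow]
    field_simp
  have hcorr : m * (m - 1) * ((m - 4) / m) ^ #J ≤ μ ^ 2 := by
    have hbase : (m - 4) / m ≤ ((m - 2) / m) ^ 2 := by
      rw [div_pow, div_le_div_iff₀ (by positivity) (by positivity)]
      nlinarith
    calc m * (m - 1) * ((m - 4) / m) ^ #J ≤ m ^ 2 * (((m - 2) / m) ^ 2) ^ #J :=
          mul_le_mul (by nlinarith) (pow_le_pow_left₀ (div_nonneg (by linarith) (by positivity))
            hbase #J) (pow_nonneg (div_nonneg (by linarith) (by positivity)) #J) (by positivity)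
      _ = μ ^ 2 := by rw [← pow_mul, mul_comm 2 #J, pow_mul]; ring
  calc ∑ π : ι → α, (signSum π J - μ) ^ 2
      = ∑ π : ι → α, signSum π J ^ 2 - 2 * μ * ∑ π : ι → α, signSum π J
          + m ^ Fintype.card ι * μ ^ 2 := by
        simp only [sub_sq, sum_add_distrib, sum_sub_distrib, ← sum_mul, ← mul_sum, sum_const,
          card_univ, Fintype.card_fun, nsmul_eq_mul, Nat.cast_pow, ← hm_def]
        ring
    _ = m ^ Fintype.card ι * (m + (m * (m - 1) * ((m - 4) / m) ^ #J - μ ^ 2)) := by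
        rw [hmean, hsq]; ring
    _ ≤ m ^ Fintype.card ι * m := by
        gcongr
        linarith

theorem card_filter_card_oddClasses_le_mul_sq_le (hα : 4 ≤ Fintype.card α) (J : Finset ι)
    (k : ℕ) {d : ℝ} (hd : 0 ≤ d)
    (hμ : Fintype.card α * ((Fintype.card α - 2) / Fintype.card α) ^ #J + d ≤
      (Fintype.card α : ℝ) - 2 * k) :
    #{π : ι → α | #(oddClasses π J) ≤ k} * d ^ 2 ≤
      (Fintype.card α : ℝ) ^ Fintype.card ι * Fintype.card α := by
  set μ : ℝ := Fintype.card α * ((Fintype.card α - 2) / Fintype.card α) ^ #J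
  calc #{π : ι → α | #(oddClasses π J) ≤ k} * d ^ 2
      = ∑ π ∈ {π : ι → α | #(oddClasses π J) ≤ k}, d ^ 2 := by rw [sum_const, nsmul_eq_mul]
    _ ≤ ∑ π ∈ {π : ι → α | #(oddClasses π J) ≤ k}, (signSum π J - μ) ^ 2 :=
        sum_le_sum fun π hπ => by
          have hk : (#(oddClasses π J) : ℝ) ≤ k := by exact_mod_cast (mem_filter.1 hπ).2
          have : d ≤ signSum π J - μ := by rw [signSum_eq]; linarith
          gcongr
    _ ≤ ∑ π : ι → α, (signSum π J - μ) ^ 2 :=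
        sum_le_sum_of_subset_of_nonneg (subset_univ _) fun _ _ _ => sq_nonneg _
    _ ≤ _ := sum_sub_sq_signSum_le hα J

variable {k : ℕ}

theorem ten_mul_card_filter_lt_of_card_le (hα : Fintype.card α = 100 * k ^ 2) (hk : 100 < k)
    (J : Finset ι) (hJ : k < #J) (hsmall : #J ≤ 51 * k) :
    10 * (#{π : ι → α | #(oddClasses π J) ≤ k} : ℝ) < (100 * k ^ 2 : ℝ) ^ Fintype.card ι := by
  set bad := #{π : ι → α | #(oddClasses π J) ≤ k}
  set t := #J
  have hι : Fintype.card ι = Fintype.card ι - 1 + 1 := by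
    have := card_le_univ J
    omega
  have hmarkov : (bad : ℝ) * (t - k) ≤ (t * t - t) * (100 * k ^ 2 : ℝ) ^ (Fintype.card ι - 1) := by
    have hnat := card_filter_card_oddClasses_le_mul_le (α := α) J k
    rw [offDiag_card, hα] at hnat
    have hcast : ((bad * (t - k) : ℕ) : ℝ) ≤
        ((t * t - t) * (100 * k ^ 2) ^ (Fintype.card ι - 1) : ℕ) := by exact_mod_cast hnat
    push_cast [Nat.cast_sub hJ.le, Nat.cast_sub (Nat.le_mul_self t)] at hcast
    exact hcast
  have harith : 10 * ((t : ℝ) * t - t) < (t - k) * (100 * k ^ 2) := by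
    have h1 : (k : ℝ) + 1 ≤ t := by exact_mod_cast hJ
    have h2 : (t : ℝ) ≤ 51 * k := by exact_mod_cast hsmall
    have h3 : (101 : ℝ) ≤ k := by exact_mod_cast hk
    nlinarith [mul_nonneg (sub_nonneg.2 h1) (sub_nonneg.2 h2), mul_nonneg (sub_nonneg.2 h1)
      (sub_nonneg.2 h3), mul_nonneg (sub_nonneg.2 h2) (sub_nonneg.2 h3)]
  have htk : (0 : ℝ) < t - k := sub_pos.2 (by exact_mod_cast hJ)
  refine lt_of_mul_lt_mul_right ?_ htk.le
  rw [hι, pow_succ]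
  nlinarith [pow_pos (by positivity : (0 : ℝ) < 100 * k ^ 2) (Fintype.card ι - 1)]

theorem ten_mul_card_filter_lt_of_lt (hα : Fintype.card α = 100 * k ^ 2) (hk : 100 < k)
    (J : Finset ι) (hlarge : 51 * k < #J) :
    10 * (#{π : ι → α | #(oddClasses π J) ≤ k} : ℝ) < (100 * k ^ 2 : ℝ) ^ Fintype.card ι := by
  set m : ℝ := 100 * k ^ 2 with hm_def
  set t := #J
  have hm : (Fintype.card α : ℝ) = m := by rw [hα]; push_cast; rfl
  have hk' : (101 : ℝ) ≤ k := by exact_mod_cast hk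
  have ht : 51 * (k : ℝ) + 1 ≤ t := by exact_mod_cast hlarge
  have hmpos : 0 < m := by positivity
  have hmean : m * ((m - 2) / m) ^ t + 32 * k ≤ m - 2 * k := by
    have hbern := one_sub_pow_mul_one_add_mul_le_one (x := 2 / m) (by positivity)
      ((div_le_one hmpos).2 (by nlinarith)) t
    have hμ : m * ((m - 2) / m) ^ t * (m + 2 * t) ≤ m ^ 2 := by
      calc m * ((m - 2) / m) ^ t * (m + 2 * t) = m ^ 2 * ((1 - 2 / m) ^ t * (1 + t * (2 / m))) := by
            field_simp
        _ ≤ m ^ 2 := mul_le_of_le_one_right (by positivity) hbern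
    have hgap : m ^ 2 ≤ (m - 34 * k) * (m + 2 * t) := by
      nlinarith [mul_le_mul_of_nonneg_right ht (by nlinarith : (0 : ℝ) ≤ m - 34 * k)]
    have := le_of_mul_le_mul_right (hμ.trans hgap) (by positivity)
    linarith
  have hcheb := card_filter_card_oddClasses_le_mul_sq_le (α := α) (by rw [hα]; nlinarith) J k
    (d := 32 * k) (by positivity) (by rw [hm]; exact hmean)
  rw [hm] at hcheb
  nlinarith [pow_pos hmpos (Fintype.card ι)]

end RandomPartition

open RandomPartition

theorem random_partition_large_general (n k : ℕ) (hk : 100 < k)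
    (J : Finset (Fin n)) (hJ : k < J.card) :
    (9 / 10 : ℝ) <
      ((univ.filter fun π : Fin n → Fin (100 * k ^ 2) =>
          k < (univ.filter fun c : Fin (100 * k ^ 2) =>
            Odd (J.filter fun j => π j = c).card).card).card : ℝ) /
        (Fintype.card (Fin n → Fin (100 * k ^ 2)) : ℝ) := by
  have hα : Fintype.card (Fin (100 * k ^ 2)) = 100 * k ^ 2 := Fintype.card_fin _
  have hbad : 10 * (#{π : Fin n → Fin (100 * k ^ 2) | #(oddClasses π J) ≤ k} : ℝ) <
      (100 * k ^ 2 : ℝ) ^ n := by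
    rcases le_or_gt #J (51 * k) with hsmall | hlarge
    · simpa using ten_mul_card_filter_lt_of_card_le hα hk J hJ hsmall
    · simpa using ten_mul_card_filter_lt_of_lt hα hk J hlarge
  have hsplit := card_filter_add_card_filter_not (s := (univ : Finset (Fin n → Fin (100 * k ^ 2))))
    (p := fun π => k < #(oddClasses π J))
  simp only [not_lt, card_univ, Fintype.card_fun, hα, Fintype.card_fin] at hsplit
  rw [Fintype.card_fun, hα, Fintype.card_fin, lt_div_iff₀ (by positivity)]
  push_cast
  have hcast := congrArg (Nat.cast : ℕ → ℝ) hsplit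
  push_cast at hcast
  unfold oddClasses at hcast hbad
  linarith

/-- For a uniformly random partition `π : Fin n → Fin (100 k²)` and any `J` with `|J| > k`,
the probability that the number of classes containing an odd number of elements of `J`
exceeds `k` is greater than `9/10`. -/
theorem random_partition_large (n k : ℕ) (hk : 100 < k) (hn : 100 * k ^ 2 < n)
    (J : Finset (Fin n)) (hJ : k < J.card) :
    (9 / 10 : ℝ) <
      ((univ.filter fun π : Fin n → Fin (100 * k ^ 2) =>
          k < (univ.filter fun c : Fin (100 * k ^ 2) =>
            Odd (J.filter fun j => π j = c).card).card).card : ℝ) /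
        (Fintype.card (Fin n → Fin (100 * k ^ 2)) : ℝ) :=
  random_partition_large_general n k hk J hJ
end

section
/- Let n, k ≥ 1 with k ∣ n and n/k ≥ 2k. Given m : Fin k → Fin (2k), let x ⊆ Fin n be the set { i·(n/k) + (m i) : i ∈ Fin k } (one element in each of the k consecutive blocks of size n/k, at offset m i within block i). Fix i₀ ∈ Fin k and a bit position ℓ, and let y ⊆ Fin n be the set { i₀·(n/k) + j : j < 2k and the ℓ-th bit of the binary expansion of j equals 1 }. Then: (i) |x| = k; (ii) |x ∩ y| ≤ 1; and (iii) x ∩ y ≠ ∅ if and only if the ℓ-th bit of the binary expansion of m i₀ equals 1. -/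
/-!
Since all offsets are smaller than the block size `n / k`, a position `i * (n / k) + r` determines
its block `i` and offset `r` (quotient and remainder). Hence `x` has exactly one point per block,
and the only point of `x` that can lie in `y` is the one in block `i₀`, at offset `m i₀`; it lies
in `y` exactly when bit `ℓ` of `m i₀` is set.
-/

open Finset

theorem eq_and_eq_of_mul_add_eq_mul_add {b i i' r r' : ℕ} (hr : r < b) (hr' : r' < b)
    (h : i * b + r = i' * b + r') : i = i' ∧ r = r' := by
  have quot_rem : ∀ {j s : ℕ}, s < b → (j * b + s) / b = j ∧ (j * b + s) % b = s :=
    fun hs => (Nat.div_mod_unique (by omega)).2 ⟨by ring, hs⟩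
  obtain ⟨hq, hrem⟩ := quot_rem (j := i) hr
  obtain ⟨hq', hrem'⟩ := quot_rem (j := i') hr'
  rw [h] at hq hrem
  exact ⟨hq.symm.trans hq', hrem.symm.trans hrem'⟩

theorem exists_mul_add_and_exists_mul_add_iff {k c b : ℕ} (hc : c ≤ b) (m : Fin k → Fin c)
    (i₀ : Fin k) (P : Fin c → Prop) (a : ℕ) :
    ((∃ i : Fin k, a = i * b + m i) ∧ ∃ j : Fin c, P j ∧ a = i₀ * b + j) ↔
      P (m i₀) ∧ a = i₀ * b + m i₀ := by
  constructor
  · rintro ⟨⟨i, rfl⟩, j, hj, ha⟩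
    obtain ⟨hi, hoff⟩ :=
      eq_and_eq_of_mul_add_eq_mul_add ((m i).isLt.trans_le hc) (j.isLt.trans_le hc) ha
    obtain rfl : i = i₀ := Fin.ext hi
    obtain rfl : m i = j := Fin.ext hoff
    exact ⟨hj, rfl⟩
  · rintro ⟨hP, rfl⟩
    exact ⟨⟨i₀, rfl⟩, m i₀, hP, rfl⟩

def blockPoint {n k c : ℕ} (hc : c ≤ n / k) (m : Fin k → Fin c) (i : Fin k) : Fin n :=
  ⟨i * (n / k) + m i, calc
    (i : ℕ) * (n / k) + m i = n / k * i + m i := by rw [mul_comm]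
    _ < k * (n / k) := Nat.mul_add_lt_mul_of_lt_of_lt i.isLt ((m i).isLt.trans_le hc)
    _ ≤ n := Nat.mul_div_le n k⟩

theorem blockPoint_injective {n k c : ℕ} (hc : c ≤ n / k) (m : Fin k → Fin c) :
    Function.Injective (blockPoint hc m) := fun i i' h =>
  Fin.ext (eq_and_eq_of_mul_add_eq_mul_add ((m i).isLt.trans_le hc)
    ((m i').isLt.trans_le hc) (Fin.val_eq_of_eq h)).1

theorem card_filter_exists_eq_mul_add {n k c : ℕ} (hc : c ≤ n / k) (m : Fin k → Fin c) :
    (univ.filter fun a : Fin n => ∃ i : Fin k, (a : ℕ) = i * (n / k) + m i).card = k := by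
  have himage : (univ.filter fun a : Fin n => ∃ i : Fin k, (a : ℕ) = i * (n / k) + m i) =
      univ.map ⟨blockPoint hc m, blockPoint_injective hc m⟩ := by
    ext a
    simp only [mem_filter, mem_univ, true_and, mem_map, Function.Embedding.coeFn_mk]
    exact exists_congr fun i => ⟨fun h => Fin.ext h.symm, fun h => (Fin.val_eq_of_eq h).symm⟩
  rw [himage, card_map, card_univ, Fintype.card_fin]

theorem unique_disjointness_gadget_general (n k : ℕ) (hblock : 2 * k ≤ n / k)
    (m : Fin k → Fin (2 * k)) (i₀ : Fin k) (ℓ : ℕ) :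
    let x : Finset (Fin n) :=
      univ.filter fun a : Fin n => ∃ i : Fin k, (a : ℕ) = (i : ℕ) * (n / k) + (m i : ℕ)
    let y : Finset (Fin n) :=
      univ.filter fun a : Fin n => ∃ j : Fin (2 * k),
        Nat.testBit (j : ℕ) ℓ = true ∧ (a : ℕ) = (i₀ : ℕ) * (n / k) + (j : ℕ)
    x.card = k ∧ (x ∩ y).card ≤ 1 ∧
      ((x ∩ y).Nonempty ↔ Nat.testBit ((m i₀ : ℕ)) ℓ = true) := by
  intro x y
  have hmem : ∀ a, a ∈ x ∩ y ↔
      Nat.testBit (m i₀ : ℕ) ℓ = true ∧ (a : ℕ) = i₀ * (n / k) + m i₀ := fun a => by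
    simpa only [x, y, mem_inter, mem_filter, mem_univ, true_and] using
      exists_mul_add_and_exists_mul_add_iff hblock m i₀ (fun j => Nat.testBit j ℓ = true) a
  refine ⟨card_filter_exists_eq_mul_add hblock m, card_le_one.2 fun a ha a' ha' => ?_,
    fun ⟨a, ha⟩ => ((hmem a).1 ha).1, fun hbit => ⟨blockPoint hblock m i₀, (hmem _).2 ⟨hbit, rfl⟩⟩⟩
  exact Fin.ext (((hmem a).1 ha).2.trans ((hmem a').1 ha').2.symm)

/-- The unique-intersection gadget for the one-way lower bound for `k`-disjointness:
with `x` containing one element per block (at offset `m i` in block `i`) and `y` supported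
on block `i₀` at offsets `j < 2k` whose `ℓ`-th bit is `1`, we have `|x| = k`,
`|x ∩ y| ≤ 1`, and `x ∩ y ≠ ∅` iff the `ℓ`-th bit of `m i₀` is `1`. -/
theorem unique_disjointness_gadget (n k : ℕ) (hn : 1 ≤ n) (hk : 1 ≤ k)
    (hdvd : k ∣ n) (hblock : 2 * k ≤ n / k)
    (m : Fin k → Fin (2 * k)) (i₀ : Fin k) (ℓ : ℕ) :
    let x : Finset (Fin n) :=
      univ.filter fun a : Fin n => ∃ i : Fin k, (a : ℕ) = (i : ℕ) * (n / k) + (m i : ℕ)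
    let y : Finset (Fin n) :=
      univ.filter fun a : Fin n => ∃ j : Fin (2 * k),
        Nat.testBit (j : ℕ) ℓ = true ∧ (a : ℕ) = (i₀ : ℕ) * (n / k) + (j : ℕ)
    x.card = k ∧ (x ∩ y).card ≤ 1 ∧
      ((x ∩ y).Nonempty ↔ Nat.testBit ((m i₀ : ℕ)) ℓ = true) :=
  unique_disjointness_gadget_general n k hblock m i₀ ℓ
end
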